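/- Let H be the group with generators a_{123}, a_{124}, a_{134}, a_{234} subject only to the tetrahedron relation a_{123} a_{124} a_{134} a_{234} = a_{234} a_{134} a_{124} a_{123} (that is, the presentation of G_4^3 without the involutivity relations a_{ijk}^2 = 1). Then the elements of H represented by the words a_{123} a_{124} a_{134} a_{124} a_{134} a_{123} and a_{234} a_{134} a_{124} a_{134} a_{123} a_{234} are distinct. -/
import Mathlib


/-- Index type for the generators: 3-element subsets of `Fin 4`. -/
abbrev TripleIndex4 := {s : Finset (Fin 4) // s.card = 3}

def t123 : TripleIndex4 := ⟨{0, 1, 2}, by decide⟩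
def t124 : TripleIndex4 := ⟨{0, 1, 3}, by decide⟩
def t134 : TripleIndex4 := ⟨{0, 2, 3}, by decide⟩
def t234 : TripleIndex4 := ⟨{1, 2, 3}, by decide⟩

/-- The tetrahedron relator `a_{123} a_{124} a_{134} a_{234} (a_{234} a_{134} a_{124} a_{123})⁻¹`. -/
def tetRel : FreeGroup TripleIndex4 :=
  FreeGroup.of t123 * FreeGroup.of t124 * FreeGroup.of t134 * FreeGroup.of t234 *
    (FreeGroup.of t234 * FreeGroup.of t134 * FreeGroup.of t124 * FreeGroup.of t123)⁻¹

/-- The group `H`: generators `a_{123}, a_{124}, a_{134}, a_{234}` subject only to the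
tetrahedron relation (no involutivity relations). -/
abbrev H4 := PresentedGroup ({tetRel} : Set (FreeGroup TripleIndex4))

/-- Count exponent sum of `t123`: a map to `Multiplicative ℤ`. -/
def cnt : TripleIndex4 → Multiplicative ℤ :=
  fun x => if x = t123 then Multiplicative.ofAdd 1 else 1

lemma cnt1 : cnt t123 = Multiplicative.ofAdd 1 := if_pos rfl
lemma cnt2 : cnt t124 = 1 := if_neg (by decide)
lemma cnt3 : cnt t134 = 1 := if_neg (by decide)
lemma cnt4 : cnt t234 = 1 := if_neg (by decide)

lemma cnt_closure : ∀ r ∈ ({tetRel} : Set (FreeGroup TripleIndex4)),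
    FreeGroup.lift cnt r = 1 := by
  intro r hr
  rcases hr with rfl
  simp only [tetRel, map_mul, map_inv, FreeGroup.lift_apply_of, cnt1, cnt2, cnt3, cnt4]
  group

/-- The induced homomorphism. -/
def φ : H4 →* Multiplicative ℤ := PresentedGroup.toGroup cnt_closure

/-- In `H`, the words `a_{123} a_{124} a_{134} a_{124} a_{134} a_{123}` and
`a_{234} a_{134} a_{124} a_{134} a_{123} a_{234}` represent distinct elements. -/
theorem words_distinct_without_involutivity :
    (PresentedGroup.of t123 * PresentedGroup.of t124 * PresentedGroup.of t134 *
        PresentedGroup.of t124 * PresentedGroup.of t134 * PresentedGroup.of t123 : H4) ≠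
      PresentedGroup.of t234 * PresentedGroup.of t134 * PresentedGroup.of t124 *
        PresentedGroup.of t134 * PresentedGroup.of t123 * PresentedGroup.of t234 := by
  intro h
  have := congrArg φ h
  simp only [map_mul, φ, PresentedGroup.toGroup.of, cnt1, cnt2, cnt3, cnt4,
    one_mul, mul_one] at this
  exact absurd this (by decide)
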